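/- arXiv:1809.03163 — 2 statements merged into one kernel-verified Lean document; each statement's English description precedes it below -/
import Mathlib

section
/- Let f : ℝ → ℝ be bounded by M on [a,b] and Riemann integrable with integral I. For each m, take the equal partition with tags ξₖ, disturbed lengths c̃ₖ(m) ≥ 0 with ∑_{k=1}^m |c̃ₖ(m) − (b-a)/m| → 0, and a fixed natural number K ≥ 1 with index sets J_K(m) ⊆ {1,…,m} of size K. Then ∑_{k ∉ J_K(m)} f(ξₖ)·c̃ₖ(m) → I as m → ∞. -/
open Filter Topology Set

/-- Deleting Items and Disturbing Mesh Theorem (one-dimensional, fixed K). -/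
theorem deleting_and_disturbing_fixed_K
    (f : ℝ → ℝ) (a b I M : ℝ) (hab : a < b)
    (hM : ∀ x ∈ Icc a b, |f x| ≤ M)
    -- f is Riemann integrable over [a,b] with integral I
    (hInt : ∀ η : ℕ → ℕ → ℝ,
      (∀ (m k : ℕ), k < m →
        η m k ∈ Icc (a + (k : ℝ) * (b - a) / (m : ℝ)) (a + ((k : ℝ) + 1) * (b - a) / (m : ℝ))) →
      Tendsto (fun m : ℕ => ∑ k ∈ Finset.range m, f (η m k) * ((b - a) / (m : ℝ)))
        atTop (𝓝 I))
    (ξ : ℕ → ℕ → ℝ)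
    (hξ : ∀ (m k : ℕ), k < m →
      ξ m k ∈ Icc (a + (k : ℝ) * (b - a) / (m : ℝ)) (a + ((k : ℝ) + 1) * (b - a) / (m : ℝ)))
    (c : ℕ → ℕ → ℝ)
    (hc : ∀ (m k : ℕ), k < m → 0 ≤ c m k)
    (hcsum : Tendsto (fun m : ℕ => ∑ k ∈ Finset.range m, |c m k - (b - a) / (m : ℝ)|)
      atTop (𝓝 0))
    -- the disturbed lengths are individually small: c m k ≤ (b-a)/m + εₘ with εₘ → 0
    (ε : ℕ → ℝ) (hε : Tendsto ε atTop (𝓝 0))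
    (hcε : ∀ (m k : ℕ), k < m → c m k ≤ (b - a) / (m : ℝ) + ε m)
    (K : ℕ) (hK : 1 ≤ K)
    (J : ℕ → Finset ℕ)
    (hJ : ∀ m : ℕ, K < m → J m ⊆ Finset.range m ∧ (J m).card = K) :
    Tendsto (fun m : ℕ => ∑ k ∈ Finset.range m \ J m, f (ξ m k) * c m k) atTop (𝓝 I) := by
  have hM0 : 0 ≤ M := le_trans (abs_nonneg _) (hM a ⟨le_refl a, hab.le⟩)
  -- tags are in [a,b]
  have hξab : ∀ m k : ℕ, k < m → ξ m k ∈ Icc a b := by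
    intro m k hkm
    have hm0 : (0:ℝ) < (m:ℝ) := by exact_mod_cast Nat.pos_of_ne_zero (by omega)
    obtain ⟨h1, h2⟩ := hξ m k hkm
    constructor
    · refine le_trans ?_ h1
      have : 0 ≤ (k:ℝ) * (b - a) / (m:ℝ) :=
        div_nonneg (mul_nonneg (Nat.cast_nonneg k) (sub_nonneg.2 hab.le)) hm0.le
      linarith
    · refine le_trans h2 ?_
      have hk1 : ((k:ℝ) + 1) ≤ (m:ℝ) := by exact_mod_cast Nat.succ_le_of_lt hkm
      have : ((k:ℝ) + 1) * (b - a) / (m:ℝ) ≤ (m:ℝ) * (b - a) / (m:ℝ) := by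
        apply div_le_div_of_nonneg_right ?_ hm0.le
        exact mul_le_mul_of_nonneg_right hk1 (sub_nonneg.2 hab.le)
      have hmm : (m:ℝ) * (b - a) / (m:ℝ) = b - a := by field_simp
      linarith [this, hmm ▸ this]
  have hfb : ∀ m k : ℕ, k < m → |f (ξ m k)| ≤ M := fun m k hkm => hM _ (hξab m k hkm)
  -- main Riemann sum
  have hmain := hInt ξ hξ
  -- error 1 : disturbance of lengths
  have he1 : Tendsto (fun m : ℕ => ∑ k ∈ Finset.range m,
      f (ξ m k) * (c m k - (b - a) / (m : ℝ))) atTop (𝓝 0) := by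
    have hub : ∀ m : ℕ, |∑ k ∈ Finset.range m, f (ξ m k) * (c m k - (b - a) / (m : ℝ))|
        ≤ M * ∑ k ∈ Finset.range m, |c m k - (b - a) / (m : ℝ)| := by
      intro m
      calc |∑ k ∈ Finset.range m, f (ξ m k) * (c m k - (b - a) / (m : ℝ))|
          ≤ ∑ k ∈ Finset.range m, |f (ξ m k) * (c m k - (b - a) / (m : ℝ))| :=
            Finset.abs_sum_le_sum_abs _ _
        _ ≤ ∑ k ∈ Finset.range m, M * |c m k - (b - a) / (m : ℝ)| := by
            apply Finset.sum_le_sum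
            intro k hk
            rw [abs_mul]
            exact mul_le_mul_of_nonneg_right (hfb m k (Finset.mem_range.1 hk)) (abs_nonneg _)
        _ = M * ∑ k ∈ Finset.range m, |c m k - (b - a) / (m : ℝ)| := by
            rw [Finset.mul_sum]
    have h0 : Tendsto (fun m : ℕ => M * ∑ k ∈ Finset.range m, |c m k - (b - a) / (m : ℝ)|)
        atTop (𝓝 0) := by
      simpa using hcsum.const_mul M
    refine squeeze_zero_norm (fun m => ?_) h0
    simpa using hub m
  -- error 2 : deleted terms
  have he2 : Tendsto (fun m : ℕ => ∑ k ∈ J m, f (ξ m k) * c m k) atTop (𝓝 0) := by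
    have h0 : Tendsto (fun m : ℕ => (K:ℝ) * (M * ((b - a) / (m:ℝ) + ε m))) atTop (𝓝 0) := by
      have h1 : Tendsto (fun m : ℕ => (b - a) / (m:ℝ) + ε m) atTop (𝓝 0) := by
        simpa using (tendsto_const_div_atTop_nhds_zero_nat (b - a)).add hε
      simpa using ((h1.const_mul M).const_mul (K:ℝ))
    have hub : ∀ᶠ m : ℕ in atTop, |∑ k ∈ J m, f (ξ m k) * c m k|
        ≤ (K:ℝ) * (M * ((b - a) / (m:ℝ) + ε m)) := by
      filter_upwards [eventually_gt_atTop K] with m hm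
      obtain ⟨hJs, hJc⟩ := hJ m hm
      calc |∑ k ∈ J m, f (ξ m k) * c m k|
          ≤ ∑ k ∈ J m, |f (ξ m k) * c m k| := Finset.abs_sum_le_sum_abs _ _
        _ ≤ ∑ _k ∈ J m, M * ((b - a) / (m:ℝ) + ε m) := by
            apply Finset.sum_le_sum
            intro k hk
            have hkm : k < m := Finset.mem_range.1 (hJs hk)
            rw [abs_mul, abs_of_nonneg (hc m k hkm)]
            exact mul_le_mul (hfb m k hkm) (hcε m k hkm) (hc m k hkm)
              hM0
        _ = (K:ℝ) * (M * ((b - a) / (m:ℝ) + ε m)) := by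
            rw [Finset.sum_const, hJc, nsmul_eq_mul]
    refine squeeze_zero_norm' ?_ h0
    simpa using hub
  -- combine
  have hcomb : Tendsto (fun m : ℕ =>
      (∑ k ∈ Finset.range m, f (ξ m k) * ((b - a) / (m : ℝ)))
      + (∑ k ∈ Finset.range m, f (ξ m k) * (c m k - (b - a) / (m : ℝ)))
      - (∑ k ∈ J m, f (ξ m k) * c m k)) atTop (𝓝 I) := by
    simpa using (hmain.add he1).sub he2
  refine hcomb.congr' ?_
  filter_upwards [eventually_gt_atTop K] with m hm
  obtain ⟨hJs, _⟩ := hJ m hm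
  have h1 : (∑ k ∈ Finset.range m, f (ξ m k) * ((b - a) / (m : ℝ)))
      + (∑ k ∈ Finset.range m, f (ξ m k) * (c m k - (b - a) / (m : ℝ)))
      = ∑ k ∈ Finset.range m, f (ξ m k) * c m k := by
    rw [← Finset.sum_add_distrib]
    apply Finset.sum_congr rfl
    intro k _
    ring
  rw [h1, ← Finset.sum_sdiff hJs]
  ring
end

section
/- (Combined deleting and disturbing for vector line integrals, fixed K) Under the setup of the vector line integral with equal partitions, tags tₖ*, and disturbed step sizes Δt̃ₖ ≥ 0 satisfying ∑_k |Δt̃ₖ − (b−a)/m| → 0 and max_k Δt̃ₖ → 0, for a fixed K ≥ 1 and index sets J_K(m) of size K, the sums ∑_{k ∉ J_K(m)} F(x(tₖ*))·x′(tₖ*)·Δt̃ₖ converge to ∫_a^b F(x(t))·x′(t) dt as m → ∞. -/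
/-!
Deleting the terms with index in `J_K(m)` is itself a disturbance of the step sizes: replacing
`Δt̃ₖ` by `0` for `k ∈ J_K(m)` increases `∑ₖ |Δt̃ₖ - (b - a)/m|` by at most `K (b - a)/m → 0`.
The integrand `g t = F(x t) · x'(t)` is continuous, hence bounded, on `[a, b]`, so a disturbance
of vanishing total size changes the Riemann sums of `g` by a vanishing amount; and the undisturbed
Riemann sums over the equal partitions converge to `∫_a^b g` by uniform continuity of `g`.
-/

open Filter Topology Set MeasureTheory

theorem abs_mul_sub_intervalIntegral_le {g : ℝ → ℝ} {p q s ε : ℝ} (hpq : p ≤ q)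
    (hg : IntervalIntegrable g volume p q) (hosc : ∀ t ∈ Icc p q, |g s - g t| ≤ ε) :
    |g s * (q - p) - ∫ t in p..q, g t| ≤ ε * (q - p) := by
  have hsub : g s * (q - p) - ∫ t in p..q, g t = ∫ t in p..q, (g s - g t) := by
    rw [intervalIntegral.integral_sub intervalIntegrable_const hg,
      intervalIntegral.integral_const, smul_eq_mul, mul_comm]
  have hle := intervalIntegral.norm_integral_le_of_norm_le_const (f := fun t => g s - g t)
    (C := ε) fun t ht => hosc t (Ioc_subset_Icc_self (uIoc_of_le hpq ▸ ht))
  rwa [hsub, ← Real.norm_eq_abs, ← abs_of_nonneg (sub_nonneg.2 hpq)]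

theorem abs_sum_mul_sub_intervalIntegral_le {g : ℝ → ℝ} {p τ : ℕ → ℝ} {m : ℕ} {ε : ℝ}
    (hp : Monotone p) (hg : IntervalIntegrable g volume (p 0) (p m))
    (hosc : ∀ k < m, ∀ t ∈ Icc (p k) (p (k + 1)), |g (τ k) - g t| ≤ ε) :
    |∑ k ∈ Finset.range m, g (τ k) * (p (k + 1) - p k) - ∫ t in p 0..p m, g t|
      ≤ ε * (p m - p 0) := by
  have hint : ∀ k < m, IntervalIntegrable g volume (p k) (p (k + 1)) := fun k hk =>
    hg.mono_set <| uIcc_subset_uIcc (mem_uIcc_of_le (hp k.zero_le) (hp hk.le))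
      (mem_uIcc_of_le (hp (k + 1).zero_le) (hp hk))
  rw [← intervalIntegral.sum_integral_adjacent_intervals hint, ← Finset.sum_sub_distrib,
    ← Finset.sum_range_sub, Finset.mul_sum]
  refine (Finset.abs_sum_le_sum_abs _ _).trans (Finset.sum_le_sum fun k hk => ?_)
  rw [Finset.mem_range] at hk
  exact abs_mul_sub_intervalIntegral_le (hp k.le_succ) (hint k hk) (hosc k hk)

noncomputable def equalPartition (a b : ℝ) (m k : ℕ) : ℝ := a + k * ((b - a) / m)

section equalPartition

variable {a b : ℝ} {m k : ℕ}

@[simp]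
theorem equalPartition_zero : equalPartition a b m 0 = a := by
  simp [equalPartition]

theorem equalPartition_self (hm : m ≠ 0) : equalPartition a b m m = b := by
  simp [equalPartition, mul_div_cancel₀ _ (Nat.cast_ne_zero.2 hm : (m : ℝ) ≠ 0)]

@[simp]
theorem equalPartition_succ_sub :
    equalPartition a b m (k + 1) - equalPartition a b m k = (b - a) / m := by
  simp only [equalPartition, Nat.cast_succ]
  ring

theorem equalPartition_monotone (hab : a ≤ b) (m : ℕ) : Monotone (equalPartition a b m) :=
  fun k l hkl => by
    unfold equalPartition
    have : 0 ≤ (b - a) / m := div_nonneg (sub_nonneg.2 hab) m.cast_nonneg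
    gcongr

theorem Icc_equalPartition_subset (hab : a ≤ b) (hk : k < m) :
    Icc (equalPartition a b m k) (equalPartition a b m (k + 1)) ⊆ Icc a b := by
  refine Icc_subset_Icc ?_ ?_
  · simpa using equalPartition_monotone hab m k.zero_le
  · simpa [equalPartition_self (Nat.ne_zero_of_lt hk)] using equalPartition_monotone hab m hk

end equalPartition

theorem tendsto_sum_mul_equalPartition {a b : ℝ} (hab : a ≤ b) {g : ℝ → ℝ}
    (hg : ContinuousOn g (Icc a b)) {τ : ℕ → ℕ → ℝ}
    (hτ : ∀ m k, k < m → τ m k ∈ Icc (equalPartition a b m k) (equalPartition a b m (k + 1))) :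
    Tendsto (fun m : ℕ => ∑ k ∈ Finset.range m, g (τ m k) * ((b - a) / m))
      atTop (𝓝 (∫ t in a..b, g t)) := by
  rw [Metric.tendsto_atTop]
  intro ε hε
  -- `b - a + 1` rather than `b - a`, which may vanish
  have hε' : 0 < ε / (b - a + 1) := div_pos hε (by linarith)
  obtain ⟨δ, hδ, hgδ⟩ := Metric.uniformContinuousOn_iff.1
    (isCompact_Icc.uniformContinuousOn_of_continuous hg) _ hε'
  obtain ⟨N, hN⟩ := exists_nat_gt ((b - a) / δ)
  refine ⟨N + 1, fun m hNm => ?_⟩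
  have hm : m ≠ 0 := (N.succ_pos.trans_le hNm).ne'
  have hm0 : (0 : ℝ) < m := by positivity
  have hmesh : (b - a) / m < δ := by
    rw [div_lt_iff₀ hm0, ← div_lt_iff₀' hδ]
    exact hN.trans (by exact_mod_cast Nat.lt_of_succ_le hNm)
  have hosc : ∀ k < m, ∀ t ∈ Icc (equalPartition a b m k) (equalPartition a b m (k + 1)),
      |g (τ m k) - g t| ≤ ε / (b - a + 1) := by
    intro k hk t ht
    have hτk := hτ m k hk
    have hstep := equalPartition_succ_sub (a := a) (b := b) (m := m) (k := k)
    have hdist : dist (τ m k) t < δ := by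
      rw [Real.dist_eq, abs_sub_lt_iff]
      constructor <;> linarith [hτk.1, hτk.2, ht.1, ht.2]
    exact (hgδ _ (Icc_equalPartition_subset hab hk hτk) _
      (Icc_equalPartition_subset hab hk ht) hdist).le
  have hbound := abs_sum_mul_sub_intervalIntegral_le (equalPartition_monotone hab m)
    (by simpa [equalPartition_self hm] using hg.intervalIntegrable_of_Icc hab) hosc
  simp only [equalPartition_succ_sub, equalPartition_zero, equalPartition_self hm] at hbound
  rw [Real.dist_eq]
  calc _ ≤ ε / (b - a + 1) * (b - a) := hbound
    _ < ε := by
      rw [div_mul_eq_mul_div, div_lt_iff₀ (by linarith)]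
      nlinarith

theorem tendsto_sum_mul_of_tendsto_sum_abs_sub {ι κ : Type*} {l : Filter ι} {s : ι → Finset κ}
    {u v w : ι → κ → ℝ} {L M : ℝ} (hu : ∀ i, ∀ k ∈ s i, |u i k| ≤ M)
    (hw : Tendsto (fun i => ∑ k ∈ s i, u i k * w i k) l (𝓝 L))
    (hvw : Tendsto (fun i => ∑ k ∈ s i, |v i k - w i k|) l (𝓝 0)) :
    Tendsto (fun i => ∑ k ∈ s i, u i k * v i k) l (𝓝 L) := by
  have hdiff : Tendsto (fun i => ∑ k ∈ s i, u i k * v i k - ∑ k ∈ s i, u i k * w i k)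
      l (𝓝 0) := by
    refine squeeze_zero_norm (fun i => ?_) (by simpa using hvw.const_mul M)
    rw [← Finset.sum_sub_distrib, Real.norm_eq_abs, Finset.mul_sum]
    refine (Finset.abs_sum_le_sum_abs _ _).trans (Finset.sum_le_sum fun k hk => ?_)
    rw [← mul_sub, abs_mul]
    exact mul_le_mul_of_nonneg_right (hu i k hk) (abs_nonneg _)
  simpa using hdiff.add hw

theorem sum_abs_ite_mem_sub_le {κ : Type*} [DecidableEq κ] (s J : Finset κ) (c : κ → ℝ)
    (h : ℝ) :
    ∑ k ∈ s, |(if k ∈ J then 0 else c k) - h| ≤ ∑ k ∈ s, |c k - h| + J.card * |h| := by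
  calc ∑ k ∈ s, |(if k ∈ J then 0 else c k) - h|
      ≤ ∑ k ∈ s, (|c k - h| + if k ∈ J then |h| else 0) :=
        Finset.sum_le_sum fun k _ => by split_ifs <;> simp
    _ = ∑ k ∈ s, |c k - h| + (s ∩ J).card * |h| := by
        rw [Finset.sum_add_distrib, Finset.sum_ite_mem, Finset.sum_const, nsmul_eq_mul]
    _ ≤ ∑ k ∈ s, |c k - h| + J.card * |h| := by
        gcongr
        exact Finset.inter_subset_right

theorem deleting_and_disturbing_vector_line_integral_general
    (n : ℕ)
    (a b : ℝ) (hab : a < b)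
    (x x' : ℝ → EuclideanSpace ℝ (Fin n))
    (hx : ∀ t ∈ Icc a b, HasDerivWithinAt x (x' t) (Icc a b) t)
    (hx' : ContinuousOn x' (Icc a b))
    (D : Set (EuclideanSpace ℝ (Fin n)))
    (F : EuclideanSpace ℝ (Fin n) → EuclideanSpace ℝ (Fin n))
    (hF : ContinuousOn F D)
    (himg : ∀ t ∈ Icc a b, x t ∈ D)
    -- tags in the equal partition
    (ts : ℕ → ℕ → ℝ)
    (hts : ∀ (m k : ℕ), k < m →
      ts m k ∈ Icc (a + (k : ℝ) * (b - a) / (m : ℝ)) (a + ((k : ℝ) + 1) * (b - a) / (m : ℝ)))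
    -- disturbed step sizes
    (c : ℕ → ℕ → ℝ)
    (hcsum : Tendsto (fun m : ℕ => ∑ k ∈ Finset.range m, |c m k - (b - a) / (m : ℝ)|)
      atTop (𝓝 0))
    (K : ℕ)
    (J : ℕ → Finset ℕ)
    (hJ : ∀ m : ℕ, K < m → J m ⊆ Finset.range m ∧ (J m).card = K) :
    Tendsto (fun m : ℕ =>
        ∑ k ∈ Finset.range m \ J m, (inner ℝ (F (x (ts m k))) (x' (ts m k)) : ℝ) * c m k)
      atTop (𝓝 (∫ t in a..b, (inner ℝ (F (x t)) (x' t) : ℝ))) := by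
  set g : ℝ → ℝ := fun t => inner ℝ (F (x t)) (x' t)
  have hg : ContinuousOn g (Icc a b) :=
    (hF.comp (fun t ht => (hx t ht).continuousWithinAt) himg).inner hx'
  obtain ⟨M, hM⟩ := isCompact_Icc.exists_bound_of_continuousOn hg
  have hts' : ∀ m k, k < m →
      ts m k ∈ Icc (equalPartition a b m k) (equalPartition a b m (k + 1)) := by
    simpa only [equalPartition, mul_div_assoc, Nat.cast_succ] using hts
  have hdeleted : Tendsto (fun m : ℕ => ∑ k ∈ Finset.range m,
      |(if k ∈ J m then 0 else c m k) - (b - a) / m|) atTop (𝓝 0) := by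
    have hmesh := (tendsto_const_div_atTop_nhds_zero_nat (b - a)).abs.const_mul (K : ℝ)
    refine squeeze_zero' (Eventually.of_forall fun m => Finset.sum_nonneg fun k _ => abs_nonneg _)
      ?_ (by simpa using hcsum.add hmesh)
    filter_upwards [eventually_gt_atTop K] with m hm
    simpa only [(hJ m hm).2] using sum_abs_ite_mem_sub_le (Finset.range m) (J m) (c m) _
  have hsums := tendsto_sum_mul_of_tendsto_sum_abs_sub
    (fun m k hk => (Real.norm_eq_abs _).symm.trans_le <| hM _ <|
      Icc_equalPartition_subset hab.le (Finset.mem_range.1 hk) (hts' m k (Finset.mem_range.1 hk)))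
    (tendsto_sum_mul_equalPartition hab.le hg hts') hdeleted
  simpa [Finset.sdiff_eq_filter, Finset.sum_filter, mul_ite] using hsums

/-- Combined Deleting Items and Disturbing Mesh Theorem for vector line integrals
(fixed K): with disturbed step sizes whose total deviation tends to 0 and whose
maximum tends to 0, deleting a fixed number K of terms from the disturbed Riemann
sums does not change the limit ∫_a^b F(x(t))·x′(t) dt. -/
theorem deleting_and_disturbing_vector_line_integral
    (n : ℕ) (hn : 2 ≤ n)
    (a b : ℝ) (hab : a < b)
    (x x' : ℝ → EuclideanSpace ℝ (Fin n))
    (hx : ∀ t ∈ Icc a b, HasDerivWithinAt x (x' t) (Icc a b) t)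
    (hx' : ContinuousOn x' (Icc a b))
    (D : Set (EuclideanSpace ℝ (Fin n)))
    (F : EuclideanSpace ℝ (Fin n) → EuclideanSpace ℝ (Fin n))
    (hF : ContinuousOn F D)
    (himg : ∀ t ∈ Icc a b, x t ∈ D)
    -- tags in the equal partition
    (ts : ℕ → ℕ → ℝ)
    (hts : ∀ (m k : ℕ), k < m →
      ts m k ∈ Icc (a + (k : ℝ) * (b - a) / (m : ℝ)) (a + ((k : ℝ) + 1) * (b - a) / (m : ℝ)))
    -- disturbed step sizes
    (c : ℕ → ℕ → ℝ)
    (hc : ∀ (m k : ℕ), k < m → 0 ≤ c m k)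
    (hcsum : Tendsto (fun m : ℕ => ∑ k ∈ Finset.range m, |c m k - (b - a) / (m : ℝ)|)
      atTop (𝓝 0))
    -- max_k Δt̃ₖ → 0
    (hcmax : Tendsto (fun m : ℕ => ⨆ k ∈ Finset.range m, c m k) atTop (𝓝 0))
    (K : ℕ) (hK : 1 ≤ K)
    (J : ℕ → Finset ℕ)
    (hJ : ∀ m : ℕ, K < m → J m ⊆ Finset.range m ∧ (J m).card = K) :
    Tendsto (fun m : ℕ =>
        ∑ k ∈ Finset.range m \ J m, (inner ℝ (F (x (ts m k))) (x' (ts m k)) : ℝ) * c m k)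
      atTop (𝓝 (∫ t in a..b, (inner ℝ (F (x t)) (x' t) : ℝ))) :=
  deleting_and_disturbing_vector_line_integral_general n a b hab x x' hx hx' D F hF himg ts hts c
    hcsum K J hJ
end
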